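/- Let v : 2^I → ℝ≥0 be a gross substitutes valuation (satisfying the local improvement property), and let p : I → ℝ≥0 be item prices such that the demand set D(I,p) = argmax_{S⊆I} (v(S) − ∑_{j∈S} p(j)) contains some set A and |D(I,p)| > 1. Then there exists B ∈ local(A) with B ∈ D(I,p), where local(A) = { B ≠ A ⊆ I : |B \ A| ≤ 1 and |A \ B| ≤ 1 }. -/

import Mathlib

/-!
Raising prices turns a demanded bundle into a non-demanded one, and the local improvement
property then produces a local neighbour whose utility at the raised prices, hence at the
original ones, is within any prescribed margin of the optimum. Since there are finitely many
bundles, a small enough margin forces that neighbour to be demanded. If some other demanded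
bundle `C` misses an item `x ∈ A`, raising the price of `x` works directly. Otherwise take a
demanded `C ⊋ A` with `C \ A` as small as possible; raising all prices outside `A` makes `A`
beat `C`, and the improvement of `C` is a demanded bundle with one item of `C \ A` fewer, so
minimality forces `|C \ A| = 1`, i.e. `C ∈ localSet A`.
-/

/-- `localSet A`: all sets obtained from `A` by adding at most one item and removing at most
one item (other than `A` itself). -/
def localSet {I : Type*} [DecidableEq I] (A : Finset I) : Set (Finset I) :=
  {B | B ≠ A ∧ (B \ A).card ≤ 1 ∧ (A \ B).card ≤ 1}

/-- The demand correspondence of a valuation `v` at item prices `p`. -/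
def demand {I : Type*} [Fintype I] [DecidableEq I] (v : Finset I → ℝ) (p : I → ℝ) :
    Set (Finset I) :=
  {S | ∀ T : Finset I, v T - ∑ j ∈ T, p j ≤ v S - ∑ j ∈ S, p j}

/-- The local improvement (LI) property of gross substitutes valuations: at any nonnegative
item prices, any bundle not in the demand set admits a strictly improving local change. -/
def LocalImprovement {I : Type*} [Fintype I] [DecidableEq I] (v : Finset I → ℝ) : Prop :=
  ∀ p : I → ℝ, (∀ j, 0 ≤ p j) → ∀ A : Finset I, A ∉ demand v p →
    ∃ B ∈ localSet A, v A - ∑ j ∈ A, p j < v B - ∑ j ∈ B, p j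

open Finset Filter Topology

section Demand

variable {I : Type*} [DecidableEq I]

def utility (v : Finset I → ℝ) (p : I → ℝ) (S : Finset I) : ℝ :=
  v S - ∑ j ∈ S, p j

def raisePrices (p : I → ℝ) (T : Finset I) (ε : ℝ) (j : I) : ℝ :=
  p j + if j ∈ T then ε else 0

lemma raisePrices_nonneg {p : I → ℝ} (hp : ∀ j, 0 ≤ p j) (T : Finset I) {ε : ℝ}
    (hε : 0 ≤ ε) (j : I) : 0 ≤ raisePrices p T ε j :=
  add_nonneg (hp j) (by split_ifs <;> simp [hε])

lemma utility_raisePrices (v : Finset I → ℝ) (p : I → ℝ) (T : Finset I) (ε : ℝ)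
    (S : Finset I) : utility v (raisePrices p T ε) S = utility v p S - ε * #(S ∩ T) := by
  simp only [utility, raisePrices, sum_add_distrib, sum_ite_mem, sum_const, nsmul_eq_mul]
  ring

variable [Fintype I] {v : Finset I → ℝ} {p : I → ℝ} {A : Finset I}

lemma mem_demand_iff {S : Finset I} :
    S ∈ demand v p ↔ ∀ T, utility v p T ≤ utility v p S := Iff.rfl

lemma utility_lt_of_notMem_demand (hA : A ∈ demand v p) {S : Finset I}
    (hS : S ∉ demand v p) : utility v p S < utility v p A := by
  obtain ⟨T, hT⟩ := not_forall.1 hS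
  exact (not_le.1 hT).trans_le (hA T)

lemma utility_eq_of_mem_demand (hA : A ∈ demand v p) {C : Finset I} (hC : C ∈ demand v p) :
    utility v p C = utility v p A :=
  le_antisymm (hA C) (hC A)

lemma exists_pos_mem_demand_of_sub_lt (hA : A ∈ demand v p) :
    ∃ g > 0, ∀ S, utility v p A - g < utility v p S → S ∈ demand v p := by
  have hgap : ∀ S : Finset I, ∀ᶠ g in 𝓝[>] (0 : ℝ),
      utility v p A - g < utility v p S → S ∈ demand v p := by
    intro S
    by_cases hS : S ∈ demand v p
    · exact Eventually.of_forall fun _ _ ↦ hS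
    · filter_upwards [nhdsWithin_le_nhds
        (eventually_lt_nhds (sub_pos.2 (utility_lt_of_notMem_demand hA hS)))] with g hg hlt
      linarith
  obtain ⟨g, hg, hpos⟩ := ((eventually_all.2 hgap).and self_mem_nhdsWithin).exists
  exact ⟨g, hpos, hg⟩

lemma LocalImprovement.exists_utility_lt (hLI : LocalImprovement v) (hp : ∀ j, 0 ≤ p j)
    {S : Finset I} (hS : S ∉ demand v p) : ∃ B ∈ localSet S, utility v p S < utility v p B :=
  hLI p hp S hS

lemma LocalImprovement.exists_mem_localSet_mem_demand_of_mem_sdiff (hLI : LocalImprovement v)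
    (hp : ∀ j, 0 ≤ p j) (hA : A ∈ demand v p) {C : Finset I} (hC : C ∈ demand v p) {x : I}
    (hxA : x ∈ A) (hxC : x ∉ C) : ∃ B ∈ localSet A, B ∈ demand v p := by
  obtain ⟨g, hg, hnear⟩ := exists_pos_mem_demand_of_sub_lt hA
  have hutil (S : Finset I) := utility_raisePrices v p {x} g S
  have hAq : utility v (raisePrices p {x} g) A = utility v p A - g := by
    simp [hutil, hxA]
  have hCq : utility v (raisePrices p {x} g) C = utility v p A := by
    simp [hutil, hxC, utility_eq_of_mem_demand hA hC]
  have hAnot : A ∉ demand v (raisePrices p {x} g) := fun h ↦ by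
    linarith [(mem_demand_iff.1 h) C]
  obtain ⟨B, hB, hAB⟩ := hLI.exists_utility_lt (raisePrices_nonneg hp {x} hg.le) hAnot
  refine ⟨B, hB, hnear B ?_⟩
  have hBq : utility v (raisePrices p {x} g) B ≤ utility v p B := by
    rw [hutil]
    linarith [mul_nonneg hg.le (Nat.cast_nonneg (α := ℝ) #(B ∩ {x}))]
  linarith

lemma LocalImprovement.exists_mem_demand_card_sdiff_add_one (hLI : LocalImprovement v)
    (hp : ∀ j, 0 ≤ p j) (hA : A ∈ demand v p) {C : Finset I} (hC : C ∈ demand v p)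
    (hCA : (C \ A).Nonempty) : ∃ B ∈ demand v p, #(B \ A) + 1 = #(C \ A) := by
  obtain ⟨g, hg, hnear⟩ := exists_pos_mem_demand_of_sub_lt hA
  have hutil (S : Finset I) :
      utility v (raisePrices p Aᶜ g) S = utility v p S - g * #(S \ A) := by
    rw [utility_raisePrices, sdiff_eq_inter_compl]
  have hAC := utility_eq_of_mem_demand hA hC
  have hCnot : C ∉ demand v (raisePrices p Aᶜ g) := fun h ↦ by
    have := (mem_demand_iff.1 h) A
    rw [hutil, hutil, Finset.sdiff_self, card_empty, Nat.cast_zero, hAC] at this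
    have : (0 : ℝ) < #(C \ A) := by exact_mod_cast hCA.card_pos
    linarith [mul_pos hg this]
  obtain ⟨B, ⟨-, -, hCB⟩, hCB_lt⟩ :=
    hLI.exists_utility_lt (raisePrices_nonneg hp Aᶜ hg.le) hCnot
  rw [hutil, hutil, hAC] at hCB_lt
  have hfewer : #(B \ A) < #(C \ A) := by
    have : g * #(B \ A) < g * #(C \ A) := by linarith [mem_demand_iff.1 hA B]
    exact_mod_cast lt_of_mul_lt_mul_left this hg.le
  have htriangle : #(C \ A) ≤ #(C \ B) + #(B \ A) :=
    (card_le_card (sdiff_triangle C B A)).trans (card_union_le _ _)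
  have hcard : #(B \ A) + 1 = #(C \ A) := by omega
  refine ⟨B, hnear B ?_, hcard⟩
  have : (#(C \ A) : ℝ) = #(B \ A) + 1 := by exact_mod_cast hcard.symm
  rw [this] at hCB_lt
  linarith

end Demand

theorem stmt_10 {I : Type*} [Fintype I] [DecidableEq I]
    (v : Finset I → ℝ)
    (hLI : LocalImprovement v)
    (p : I → ℝ) (hp : ∀ j, 0 ≤ p j)
    (A : Finset I) (hA : A ∈ demand v p)
    (hmulti : ∃ C ∈ demand v p, C ≠ A) :
    ∃ B ∈ localSet A, B ∈ demand v p := by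
  obtain ⟨C, ⟨hC, hCA⟩, hmin⟩ := Set.exists_min_image {C | C ∈ demand v p ∧ C ≠ A}
    (fun C ↦ #(C \ A)) (Set.toFinite _) hmulti
  by_cases hAC : A ⊆ C
  · have hCA' : (C \ A).Nonempty := sdiff_nonempty.2 fun h ↦ hCA (h.antisymm hAC)
    obtain ⟨B, hB, hBA⟩ := hLI.exists_mem_demand_card_sdiff_add_one hp hA hC hCA'
    by_cases hBA' : B = A
    · rw [hBA', Finset.sdiff_self, card_empty] at hBA
      exact ⟨C, ⟨hCA, hBA.ge, by simp [sdiff_eq_empty_iff_subset.2 hAC]⟩, hC⟩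
    · have := hmin B ⟨hB, hBA'⟩
      omega
  · obtain ⟨x, hxA, hxC⟩ := not_subset.1 hAC
    exact hLI.exists_mem_localSet_mem_demand_of_mem_sdiff hp hA hC hxA hxC
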